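/- arXiv:2101.11197 — 2 statements merged into one kernel-verified Lean document; each statement's English description precedes it below -/
import Mathlib

section
/- For real numbers u, v ≥ 0 and any δ > 0, there exists a constant C depending only on δ such that |u² log u² − v² log v²| ≤ (2 max(u,v) + 4 max(e⁻¹, C·max(u,v)^{1+δ})) · |u − v|. Consequently, for functions u, v on a finite measure space, |∫ u² log u² − ∫ v² log v²| ≤ C' max(e⁻¹, ‖u‖_{L^{2+2δ}}^{1+δ}, ‖v‖_{L^{2+2δ}}^{1+δ}) · ‖u − v‖_{L²}. -/
open MeasureTheory
open scoped ENNReal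

lemma aux_tlog {δ : ℝ} (hδ : 0 < δ) {t : ℝ} (ht : 0 ≤ t) :
    t * |Real.log t| ≤ max (Real.exp (-1)) (δ⁻¹ * t ^ (1 + δ)) := by
  rcases eq_or_lt_of_le ht with rfl | ht0
  · simpa using le_max_of_le_left (Real.exp_pos (-1)).le
  rcases le_total t 1 with h1 | h1
  · refine le_max_of_le_left ?_
    have hlog : Real.log t ≤ 0 := Real.log_nonpos ht h1
    rw [abs_of_nonpos hlog]
    have h2 : Real.log (t⁻¹ * Real.exp (-1)) ≤ t⁻¹ * Real.exp (-1) - 1 :=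
      Real.log_le_sub_one_of_pos (by positivity)
    rw [Real.log_mul (by positivity) (Real.exp_ne_zero _), Real.log_exp, Real.log_inv] at h2
    have h3 : -Real.log t ≤ t⁻¹ * Real.exp (-1) := by linarith
    calc t * -Real.log t ≤ t * (t⁻¹ * Real.exp (-1)) := mul_le_mul_of_nonneg_left h3 ht
      _ = Real.exp (-1) := by field_simp
  · refine le_max_of_le_right ?_
    have hlog0 : 0 ≤ Real.log t := Real.log_nonneg h1
    rw [abs_of_nonneg hlog0]
    have h2 : Real.log (t ^ δ) ≤ t ^ δ - 1 := Real.log_le_sub_one_of_pos (by positivity)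
    rw [Real.log_rpow ht0] at h2
    have h3 : Real.log t ≤ δ⁻¹ * t ^ δ := by
      rw [inv_mul_eq_div, le_div_iff₀ hδ]; nlinarith
    calc t * Real.log t ≤ t * (δ⁻¹ * t ^ δ) := mul_le_mul_of_nonneg_left h3 ht
      _ = δ⁻¹ * t ^ (1 + δ) := by rw [Real.rpow_add ht0, Real.rpow_one]; ring

lemma aux_ptwise {δ : ℝ} (hδ : 0 < δ) {u v : ℝ} (hv : 0 ≤ v) (hvu : v ≤ u) :
    |u ^ 2 * Real.log (u ^ 2) - v ^ 2 * Real.log (v ^ 2)| ≤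
      (2 * u + 4 * max (Real.exp (-1)) (δ⁻¹ * u ^ (1 + δ))) * (u - v) := by
  have hu : 0 ≤ u := hv.trans hvu
  have hmax0 : 0 < max (Real.exp (-1)) (δ⁻¹ * u ^ (1 + δ)) :=
    lt_of_lt_of_le (Real.exp_pos _) (le_max_left _ _)
  rcases eq_or_lt_of_le hv with rfl | hv0
  · simp only [ne_eq, OfNat.ofNat_ne_zero, not_false_eq_true, zero_pow, Real.log_zero,
      mul_zero, sub_zero]
    rcases eq_or_lt_of_le hu with rfl | hu0
    · simp
    have hlog : Real.log (u ^ 2) = 2 * Real.log u := by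
      rw [Real.log_pow]; norm_num
    have h1 : |u ^ 2 * Real.log (u ^ 2)| = u * (2 * (u * |Real.log u|)) := by
      rw [hlog, show u ^ 2 * (2 * Real.log u) = (u * (2 * u)) * Real.log u by ring, abs_mul,
        abs_of_nonneg (by positivity : (0:ℝ) ≤ u * (2 * u))]
      ring
    rw [h1]
    have h2 := aux_tlog hδ hu
    nlinarith
  -- now 0 < v ≤ u
  have hderiv : ∀ t ∈ Set.Icc v u, HasDerivWithinAt (fun t : ℝ => t ^ 2 * Real.log (t ^ 2))
      (2 * t * Real.log (t ^ 2) + 2 * t) (Set.Icc v u) t := by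
    intro t ht
    have ht0 : 0 < t := lt_of_lt_of_le hv0 ht.1
    have hp : HasDerivAt (fun t : ℝ => t ^ 2) (2 * t) t := by
      simpa using hasDerivAt_pow 2 t
    have h1 : HasDerivAt (fun t : ℝ => t ^ 2 * Real.log (t ^ 2))
        (2 * t * Real.log (t ^ 2) + t ^ 2 * (2 * t / t ^ 2)) t := hp.mul (hp.log (by positivity))
    have he : t ^ 2 * (2 * t / t ^ 2) = 2 * t := by field_simp
    rw [he] at h1
    exact h1.hasDerivWithinAt
  have hbound : ∀ t ∈ Set.Icc v u, ‖2 * t * Real.log (t ^ 2) + 2 * t‖ ≤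
      2 * u + 4 * max (Real.exp (-1)) (δ⁻¹ * u ^ (1 + δ)) := by
    intro t ht
    have ht0 : 0 < t := lt_of_lt_of_le hv0 ht.1
    have htu : t ≤ u := ht.2
    have h1 : t * |Real.log t| ≤ max (Real.exp (-1)) (δ⁻¹ * t ^ (1 + δ)) := aux_tlog hδ ht0.le
    have h2 : max (Real.exp (-1)) (δ⁻¹ * t ^ (1 + δ)) ≤
        max (Real.exp (-1)) (δ⁻¹ * u ^ (1 + δ)) := by
      refine max_le_max le_rfl ?_
      have := Real.rpow_le_rpow ht0.le htu (by positivity : (0:ℝ) ≤ 1 + δ)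
      have hδi : (0:ℝ) ≤ δ⁻¹ := by positivity
      nlinarith
    have hlog : Real.log (t ^ 2) = 2 * Real.log t := by rw [Real.log_pow]; norm_num
    rw [Real.norm_eq_abs]
    calc |2 * t * Real.log (t ^ 2) + 2 * t| ≤ |2 * t * Real.log (t ^ 2)| + |2 * t| :=
          abs_add_le _ _
      _ = 4 * (t * |Real.log t|) + 2 * t := by
          rw [hlog, show 2 * t * (2 * Real.log t) = 4 * t * Real.log t by ring, abs_mul,
            abs_of_nonneg (by positivity : (0:ℝ) ≤ 4 * t),
            abs_of_nonneg (by positivity : (0:ℝ) ≤ 2 * t)]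
          ring
      _ ≤ 2 * u + 4 * max (Real.exp (-1)) (δ⁻¹ * u ^ (1 + δ)) := by
          have := h1.trans h2; linarith
  have hmvt := (convex_Icc v u).norm_image_sub_le_of_norm_hasDerivWithin_le
    (f := fun t : ℝ => t ^ 2 * Real.log (t ^ 2))
    (f' := fun t : ℝ => 2 * t * Real.log (t ^ 2) + 2 * t) hderiv hbound
    (Set.left_mem_Icc.2 hvu) (Set.right_mem_Icc.2 hvu)
  simpa [Real.norm_eq_abs, abs_of_nonneg (sub_nonneg.2 hvu)] using hmvt

lemma aux_sqrt_add (a b : ℝ) (ha : 0 ≤ a) (hb : 0 ≤ b) :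
    Real.sqrt (a + b) ≤ Real.sqrt a + Real.sqrt b := by
  have h := Real.sqrt_le_sqrt (show a + b ≤ (Real.sqrt a + Real.sqrt b) ^ 2 by
    nlinarith [Real.sq_sqrt ha, Real.sq_sqrt hb, Real.sqrt_nonneg a, Real.sqrt_nonneg b])
  rwa [Real.sqrt_sq (by positivity)] at h

set_option maxHeartbeats 1000000 in
/-- Key estimate for continuity of the entropy term `u ↦ ∫ u² log u²`:
a pointwise mean-value bound, and the resulting integral estimate on a finite
measure space via Hölder and the `L^{2+2δ}` norms. -/
theorem stmt1 (δ : ℝ) (hδ : 0 < δ) :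
    (∃ C > (0:ℝ), ∀ u v : ℝ, 0 ≤ u → 0 ≤ v →
      |u ^ 2 * Real.log (u ^ 2) - v ^ 2 * Real.log (v ^ 2)| ≤
        (2 * max u v + 4 * max (Real.exp (-1)) (C * (max u v) ^ (1 + δ))) * |u - v|) ∧
    (∀ (X : Type) (_ : MeasurableSpace X) (μ : Measure X), IsFiniteMeasure μ →
      ∃ C' > (0:ℝ), ∀ u v : X → ℝ,
        MemLp u (ENNReal.ofReal (2 + 2 * δ)) μ → MemLp v (ENNReal.ofReal (2 + 2 * δ)) μ →
        Integrable (fun x => (u x) ^ 2 * Real.log ((u x) ^ 2)) μ →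
        Integrable (fun x => (v x) ^ 2 * Real.log ((v x) ^ 2)) μ →
        |(∫ x, (u x) ^ 2 * Real.log ((u x) ^ 2) ∂μ)
            - ∫ x, (v x) ^ 2 * Real.log ((v x) ^ 2) ∂μ| ≤
          C' * max (Real.exp (-1))
              (max ((eLpNorm u (ENNReal.ofReal (2 + 2 * δ)) μ).toReal ^ (1 + δ))
                   ((eLpNorm v (ENNReal.ofReal (2 + 2 * δ)) μ).toReal ^ (1 + δ))) *
            (eLpNorm (u - v) 2 μ).toReal) := by
  constructor
  · refine ⟨δ⁻¹, by positivity, fun u v hu hv => ?_⟩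
    rcases le_total v u with h | h
    · rw [max_eq_left h, abs_of_nonneg (sub_nonneg.2 h)]
      exact aux_ptwise hδ hv h
    · rw [max_eq_right h, abs_sub_comm (u ^ 2 * Real.log (u ^ 2)), abs_sub_comm u v,
        abs_of_nonneg (sub_nonneg.2 h)]
      exact aux_ptwise hδ hu h
  · intro X mX μ hμfin
    have h2δ : (0:ℝ) < 2 + 2 * δ := by linarith
    set p : ENNReal := ENNReal.ofReal (2 + 2 * δ) with hp
    have hptoReal : p.toReal = 2 + 2 * δ := ENNReal.toReal_ofReal h2δ.le
    have hpne0 : p ≠ 0 := by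
      simp only [hp, ne_eq, ENNReal.ofReal_eq_zero, not_le]; linarith
    have hpnetop : p ≠ ∞ := ENNReal.ofReal_ne_top
    have hmax1 : (1:ℝ) ≤ max 1 δ⁻¹ := le_max_left _ _
    set K : ℝ := 2 * Real.exp 1 + 4 * max 1 δ⁻¹ with hK
    have hKpos : 0 < K := by
      have := Real.exp_pos 1; rw [hK]; nlinarith
    refine ⟨K * (Real.sqrt (μ Set.univ).toReal + 2), by positivity, ?_⟩
    intro u v hu hv hiu hiv
    set Nu := (eLpNorm u p μ).toReal with hNu_def
    set Nv := (eLpNorm v p μ).toReal with hNv_def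
    have hNu0 : 0 ≤ Nu := ENNReal.toReal_nonneg
    have hNv0 : 0 ≤ Nv := ENNReal.toReal_nonneg
    set B := max (Real.exp (-1)) (max (Nu ^ (1 + δ)) (Nv ^ (1 + δ))) with hB
    have hB0 : 0 < B := lt_of_lt_of_le (Real.exp_pos _) (le_max_left _ _)
    set M : X → ℝ := fun x => max |u x| |v x| with hM
    have hM0 : ∀ x, 0 ≤ M x := fun x => le_trans (abs_nonneg _) (le_max_left _ _)
    set H : X → ℝ := fun x => max (Real.exp (-1)) (M x ^ (1 + δ)) with hH
    have hH0 : ∀ x, 0 < H x := fun x => lt_of_lt_of_le (Real.exp_pos _) (le_max_left _ _)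
    -- membership facts
    have hMmem : MemLp M p μ := by
      have h1 : MemLp ((fun x => ‖u x‖) ⊔ (fun x => ‖v x‖)) p μ := hu.norm.sup hv.norm
      have h2 : M = (fun x => ‖u x‖) ⊔ (fun x => ‖v x‖) := by
        funext x; simp [hM, Pi.sup_apply, Real.norm_eq_abs]
      rwa [h2]
    have hof2 : (ENNReal.ofReal 2 : ENNReal) = 2 := by
      rw [ENNReal.ofReal_ofNat]
    have hMrpow : MemLp (fun x => M x ^ (1 + δ)) 2 μ := by
      have h1 := hMmem.norm_rpow_div (ENNReal.ofReal (1 + δ))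
      have h2 : (ENNReal.ofReal (1 + δ)).toReal = 1 + δ := ENNReal.toReal_ofReal (by linarith)
      have h3 : p / ENNReal.ofReal (1 + δ) = 2 := by
        rw [hp, ← ENNReal.ofReal_div_of_pos (by linarith : (0:ℝ) < 1 + δ),
          show (2 + 2 * δ) / (1 + δ) = 2 by field_simp, hof2]
      rw [h2, h3] at h1
      have h4 : (fun x : X => ‖M x‖ ^ (1 + δ)) = fun x => M x ^ (1 + δ) := by
        funext x; rw [Real.norm_of_nonneg (hM0 x)]
      rwa [h4] at h1
    have hH2 : MemLp H 2 μ := by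
      have h1 : MemLp ((fun _ : X => Real.exp (-1)) ⊔ (fun x => M x ^ (1 + δ))) 2 μ :=
        (memLp_const _).sup hMrpow
      have h2 : H = (fun _ : X => Real.exp (-1)) ⊔ (fun x => M x ^ (1 + δ)) := by
        funext x; simp [hH, Pi.sup_apply]
      rwa [h2]
    have hle2 : (2:ENNReal) ≤ p := by
      rw [← hof2, hp]; exact ENNReal.ofReal_le_ofReal (by linarith)
    have huv2 : MemLp (u - v) 2 μ :=
      (hu.mono_exponent hle2).sub (hv.mono_exponent hle2)
    -- pointwise bound
    have key : ∀ x, |u x ^ 2 * Real.log (u x ^ 2) - v x ^ 2 * Real.log (v x ^ 2)| ≤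
        K * (H x * |u x - v x|) := by
      intro x
      have hmaxpos : 0 < max (Real.exp (-1)) (δ⁻¹ * M x ^ (1 + δ)) :=
        lt_of_lt_of_le (Real.exp_pos _) (le_max_left _ _)
      have h1 : |(|u x|) ^ 2 * Real.log ((|u x|) ^ 2) - (|v x|) ^ 2 * Real.log ((|v x|) ^ 2)| ≤
          (2 * M x + 4 * max (Real.exp (-1)) (δ⁻¹ * M x ^ (1 + δ))) * |(|u x|) - (|v x|)| := by
        rcases le_total (|v x|) (|u x|) with h | h
        · rw [show M x = |u x| from max_eq_left h, abs_of_nonneg (sub_nonneg.2 h)]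
          exact aux_ptwise hδ (abs_nonneg _) h
        · rw [show M x = |v x| from max_eq_right h, abs_sub_comm ((|u x|) ^ 2 * _),
            abs_sub_comm (|u x|), abs_of_nonneg (sub_nonneg.2 h)]
          exact aux_ptwise hδ (abs_nonneg _) h
      rw [sq_abs, sq_abs] at h1
      have h2 : |(|u x|) - (|v x|)| ≤ |u x - v x| := abs_abs_sub_abs_le_abs_sub _ _
      have hcoef : 0 ≤ 2 * M x + 4 * max (Real.exp (-1)) (δ⁻¹ * M x ^ (1 + δ)) := by
        have := hM0 x; nlinarith
      have h3 := h1.trans (mul_le_mul_of_nonneg_left h2 hcoef)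
      -- coefficient bound : 2 * M x + 4 * max (...) ≤ K * H x
      have hMH : M x ≤ Real.exp 1 * H x := by
        have hHx0 := (hH0 x).le
        rcases le_total (M x) 1 with h | h
        · have he : (1:ℝ) = Real.exp 1 * Real.exp (-1) := by
            rw [← Real.exp_add]; norm_num
          have hh : Real.exp (-1) ≤ H x := le_max_left _ _
          nlinarith [Real.exp_pos 1]
        · have h1' : M x ≤ M x ^ (1 + δ) := by
            calc M x = M x ^ (1:ℝ) := (Real.rpow_one _).symm
              _ ≤ M x ^ (1 + δ) := Real.rpow_le_rpow_of_exponent_le h (by linarith)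
          have hh : M x ^ (1 + δ) ≤ H x := le_max_right _ _
          nlinarith [Real.exp_one_gt_d9]
      have hmaxH : max (Real.exp (-1)) (δ⁻¹ * M x ^ (1 + δ)) ≤ max 1 δ⁻¹ * H x := by
        have hHx0 := (hH0 x).le
        refine max_le ?_ ?_
        · calc Real.exp (-1) ≤ H x := le_max_left _ _
            _ = 1 * H x := (one_mul _).symm
            _ ≤ max 1 δ⁻¹ * H x := mul_le_mul_of_nonneg_right (le_max_left _ _) hHx0
        · calc δ⁻¹ * M x ^ (1 + δ) ≤ δ⁻¹ * H x :=
              mul_le_mul_of_nonneg_left (le_max_right _ _) (by positivity)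
            _ ≤ max 1 δ⁻¹ * H x := mul_le_mul_of_nonneg_right (le_max_right _ _) hHx0
      have hcoefK : 2 * M x + 4 * max (Real.exp (-1)) (δ⁻¹ * M x ^ (1 + δ)) ≤ K * H x := by
        rw [hK]; nlinarith
      calc |u x ^ 2 * Real.log (u x ^ 2) - v x ^ 2 * Real.log (v x ^ 2)| ≤
            (2 * M x + 4 * max (Real.exp (-1)) (δ⁻¹ * M x ^ (1 + δ))) * |u x - v x| := h3
        _ ≤ (K * H x) * |u x - v x| := mul_le_mul_of_nonneg_right hcoefK (abs_nonneg _)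
        _ = K * (H x * |u x - v x|) := by ring
    -- integrability of the dominating product
    have hprodmem : MemLp (H • (u - v)) 1 μ := by
      exact huv2.smul hH2
    have hint_prod : Integrable (fun x => H x * |u x - v x|) μ := by
      have h1 : Integrable (fun x => H x * (u x - v x)) μ := by
        have := memLp_one_iff_integrable.1 hprodmem
        exact this
      have h2 := h1.abs
      refine h2.congr (Filter.Eventually.of_forall fun x => ?_)
      simp only [abs_mul, abs_of_nonneg (hH0 x).le]
    -- conjugate exponents and Hölder
    have hconj : Real.HolderConjugate 2 2 := by
      constructor <;> norm_num
    have hH2' : MemLp H (ENNReal.ofReal 2) μ := by rwa [hof2]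
    have huv2' : MemLp (u - v) (ENNReal.ofReal 2) μ := by rwa [hof2]
    have holder := integral_mul_norm_le_Lp_mul_Lq (μ := μ) (f := H) (g := u - v) hconj hH2' huv2'
    have hHnorm : ∀ x, ‖H x‖ = H x := fun x => Real.norm_of_nonneg (hH0 x).le
    -- identify the L² factor of u - v
    have hE : (∫ x, ‖u x - v x‖ ^ (2:ℝ) ∂μ) ^ (1 / (2:ℝ)) = (eLpNorm (u - v) 2 μ).toReal := by
      rw [huv2.eLpNorm_eq_integral_rpow_norm two_ne_zero ENNReal.ofNat_ne_top,
        ENNReal.toReal_ofReal (by positivity)]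
      norm_num [ENNReal.toReal_ofNat]
    have hE0 : 0 ≤ (eLpNorm (u - v) 2 μ).toReal := ENNReal.toReal_nonneg
    -- bound the L² norm of H
    have hNuint : ∫ x, ‖u x‖ ^ (2 + 2 * δ) ∂μ = Nu ^ (2 + 2 * δ) := by
      have h := hu.eLpNorm_eq_integral_rpow_norm hpne0 hpnetop
      rw [hptoReal] at h
      have hint_nonneg : 0 ≤ ∫ x, ‖u x‖ ^ (2 + 2 * δ) ∂μ :=
        integral_nonneg fun x => by positivity
      have h2 : Nu = (∫ x, ‖u x‖ ^ (2 + 2 * δ) ∂μ) ^ (2 + 2 * δ)⁻¹ := by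
        rw [hNu_def, h, ENNReal.toReal_ofReal (by positivity)]
      rw [h2, ← Real.rpow_mul hint_nonneg, inv_mul_cancel₀ h2δ.ne', Real.rpow_one]
    have hNvint : ∫ x, ‖v x‖ ^ (2 + 2 * δ) ∂μ = Nv ^ (2 + 2 * δ) := by
      have h := hv.eLpNorm_eq_integral_rpow_norm hpne0 hpnetop
      rw [hptoReal] at h
      have hint_nonneg : 0 ≤ ∫ x, ‖v x‖ ^ (2 + 2 * δ) ∂μ :=
        integral_nonneg fun x => by positivity
      have h2 : Nv = (∫ x, ‖v x‖ ^ (2 + 2 * δ) ∂μ) ^ (2 + 2 * δ)⁻¹ := by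
        rw [hNv_def, h, ENNReal.toReal_ofReal (by positivity)]
      rw [h2, ← Real.rpow_mul hint_nonneg, inv_mul_cancel₀ h2δ.ne', Real.rpow_one]
    -- pointwise bound for H²
    have hHsq : ∀ x, ‖H x‖ ^ (2:ℝ) ≤
        Real.exp (-1) ^ (2:ℕ) + (‖u x‖ ^ (2 + 2 * δ) + ‖v x‖ ^ (2 + 2 * δ)) := by
      intro x
      have hMx := hM0 x
      have h2 : (M x ^ (1 + δ)) ^ (2:ℝ) = M x ^ (2 + 2 * δ) := by
        rw [← Real.rpow_mul hMx, show (1 + δ) * 2 = 2 + 2 * δ by ring]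
      have h3 : M x ^ (2 + 2 * δ) ≤ ‖u x‖ ^ (2 + 2 * δ) + ‖v x‖ ^ (2 + 2 * δ) := by
        have hu' : (0:ℝ) ≤ |u x| ^ (2 + 2 * δ) := by positivity
        have hv' : (0:ℝ) ≤ |v x| ^ (2 + 2 * δ) := by positivity
        rcases max_cases (|u x|) (|v x|) with ⟨hc, _⟩ | ⟨hc, _⟩ <;>
          · simp only [hM, Real.norm_eq_abs]
            rw [hc]
            linarith
      have h1 : ‖H x‖ ^ (2:ℝ) ≤ Real.exp (-1) ^ (2:ℕ) + (M x ^ (1 + δ)) ^ (2:ℝ) := by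
        rw [hHnorm x]
        have hpos1 : (0:ℝ) ≤ (M x ^ (1 + δ)) ^ (2:ℝ) := by positivity
        have hpos2 : (0:ℝ) ≤ Real.exp (-1) ^ (2:ℕ) := by positivity
        rcases max_cases (Real.exp (-1)) (M x ^ (1 + δ)) with ⟨hc, _⟩ | ⟨hc, _⟩ <;>
          simp only [hH] <;> rw [hc]
        · have hee : Real.exp (-1) ^ (2:ℝ) = Real.exp (-1) ^ (2:ℕ) := by
            rw [show (2:ℝ) = ((2:ℕ):ℝ) by norm_num, Real.rpow_natCast]
          rw [hee]
          linarith
        · linarith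
      rw [h2] at h1
      linarith
    -- integrate the bound
    have hHsqInt : Integrable (fun x => ‖H x‖ ^ (2:ℝ)) μ := by
      have := hH2.integrable_norm_rpow two_ne_zero ENNReal.ofNat_ne_top
      simpa [ENNReal.toReal_ofNat] using this
    have huInt : Integrable (fun x => ‖u x‖ ^ (2 + 2 * δ)) μ := by
      have := hu.integrable_norm_rpow hpne0 hpnetop
      rwa [hptoReal] at this
    have hvInt : Integrable (fun x => ‖v x‖ ^ (2 + 2 * δ)) μ := by
      have := hv.integrable_norm_rpow hpne0 hpnetop
      rwa [hptoReal] at this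
    have hHsqI : ∫ x, ‖H x‖ ^ (2:ℝ) ∂μ ≤
        Real.exp (-1) ^ (2:ℕ) * (μ Set.univ).toReal + (Nu ^ (2 + 2 * δ) + Nv ^ (2 + 2 * δ)) := by
      have hsum : Integrable (fun x => ‖u x‖ ^ (2 + 2 * δ) + ‖v x‖ ^ (2 + 2 * δ)) μ :=
        huInt.add hvInt
      have h1 : ∫ x, ‖H x‖ ^ (2:ℝ) ∂μ ≤
          ∫ x, (Real.exp (-1) ^ (2:ℕ) + (‖u x‖ ^ (2 + 2 * δ) + ‖v x‖ ^ (2 + 2 * δ))) ∂μ :=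
        integral_mono hHsqInt ((integrable_const _).add hsum) hHsq
      rw [integral_add (integrable_const _) hsum, integral_add huInt hvInt,
        integral_const, smul_eq_mul, mul_comm, hNuint, hNvint] at h1
      unfold Measure.real at h1
      linarith
    -- the square root bound
    have hsqrtH : (∫ x, ‖H x‖ ^ (2:ℝ) ∂μ) ^ (1 / (2:ℝ)) ≤
        (Real.sqrt (μ Set.univ).toReal + 2) * B := by
      have hintH0 : 0 ≤ ∫ x, ‖H x‖ ^ (2:ℝ) ∂μ := integral_nonneg fun x => by positivity
      have hm0 : (0:ℝ) ≤ (μ Set.univ).toReal := ENNReal.toReal_nonneg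
      rw [← Real.sqrt_eq_rpow]
      have step1 : Real.sqrt (∫ x, ‖H x‖ ^ (2:ℝ) ∂μ) ≤
          Real.sqrt (Real.exp (-1) ^ (2:ℕ) * (μ Set.univ).toReal
            + (Nu ^ (2 + 2 * δ) + Nv ^ (2 + 2 * δ))) := Real.sqrt_le_sqrt hHsqI
      have step2 : Real.sqrt (Real.exp (-1) ^ (2:ℕ) * (μ Set.univ).toReal
            + (Nu ^ (2 + 2 * δ) + Nv ^ (2 + 2 * δ))) ≤
          Real.sqrt (Real.exp (-1) ^ (2:ℕ) * (μ Set.univ).toReal)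
            + (Real.sqrt (Nu ^ (2 + 2 * δ)) + Real.sqrt (Nv ^ (2 + 2 * δ))) := by
        refine (aux_sqrt_add _ _ (by positivity) (by positivity)).trans ?_
        have := aux_sqrt_add (Nu ^ (2 + 2 * δ)) (Nv ^ (2 + 2 * δ)) (by positivity) (by positivity)
        linarith
      have e1 : Real.sqrt (Real.exp (-1) ^ (2:ℕ) * (μ Set.univ).toReal) =
          Real.exp (-1) * Real.sqrt (μ Set.univ).toReal := by
        rw [Real.sqrt_mul (by positivity), Real.sqrt_sq (Real.exp_pos _).le]
      have e2 : Real.sqrt (Nu ^ (2 + 2 * δ)) = Nu ^ (1 + δ) := by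
        rw [Real.sqrt_eq_rpow, ← Real.rpow_mul hNu0]
        norm_num; ring_nf
      have e3 : Real.sqrt (Nv ^ (2 + 2 * δ)) = Nv ^ (1 + δ) := by
        rw [Real.sqrt_eq_rpow, ← Real.rpow_mul hNv0]
        norm_num; ring_nf
      have hb1 : Real.exp (-1) ≤ B := le_max_left _ _
      have hb2 : Nu ^ (1 + δ) ≤ B := le_trans (le_max_left _ _) (le_max_right _ _)
      have hb3 : Nv ^ (1 + δ) ≤ B := le_trans (le_max_right _ _) (le_max_right _ _)
      have hsq0 : 0 ≤ Real.sqrt (μ Set.univ).toReal := Real.sqrt_nonneg _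
      calc Real.sqrt (∫ x, ‖H x‖ ^ (2:ℝ) ∂μ) ≤
            Real.exp (-1) * Real.sqrt (μ Set.univ).toReal + (Nu ^ (1 + δ) + Nv ^ (1 + δ)) := by
            rw [e1, e2, e3] at step2; linarith
        _ ≤ (Real.sqrt (μ Set.univ).toReal + 2) * B := by nlinarith
    -- assemble everything
    have hprodH : ∫ x, H x * |u x - v x| ∂μ ≤
        ((Real.sqrt (μ Set.univ).toReal + 2) * B) * (eLpNorm (u - v) 2 μ).toReal := by
      have hlhs : ∫ x, H x * |u x - v x| ∂μ = ∫ x, ‖H x‖ * ‖(u - v) x‖ ∂μ := by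
        refine integral_congr_ae (Filter.Eventually.of_forall fun x => ?_)
        simp [hHnorm x, Real.norm_eq_abs, Pi.sub_apply]
      have h2' : (∫ x, ‖(u - v) x‖ ^ (2:ℝ) ∂μ) ^ (1 / (2:ℝ)) = (eLpNorm (u - v) 2 μ).toReal := by
        simpa only [Pi.sub_apply] using hE
      rw [hlhs]
      refine holder.trans ?_
      rw [h2']
      refine mul_le_mul_of_nonneg_right ?_ hE0
      exact hsqrtH
    calc |(∫ x, u x ^ 2 * Real.log (u x ^ 2) ∂μ) - ∫ x, v x ^ 2 * Real.log (v x ^ 2) ∂μ|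
        = |∫ x, (u x ^ 2 * Real.log (u x ^ 2) - v x ^ 2 * Real.log (v x ^ 2)) ∂μ| := by
          rw [integral_sub hiu hiv]
      _ ≤ ∫ x, |u x ^ 2 * Real.log (u x ^ 2) - v x ^ 2 * Real.log (v x ^ 2)| ∂μ := by
          simpa only [Real.norm_eq_abs] using
            norm_integral_le_integral_norm
              (fun x => u x ^ 2 * Real.log (u x ^ 2) - v x ^ 2 * Real.log (v x ^ 2)) (μ := μ)
      _ ≤ ∫ x, K * (H x * |u x - v x|) ∂μ := by
          refine integral_mono (hiu.sub hiv).abs (hint_prod.const_mul K)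
            (fun x => key x)
      _ = K * ∫ x, H x * |u x - v x| ∂μ := MeasureTheory.integral_const_mul K _
      _ ≤ K * (((Real.sqrt (μ Set.univ).toReal + 2) * B) * (eLpNorm (u - v) 2 μ).toReal) :=
          mul_le_mul_of_nonneg_left hprodH hKpos.le
      _ = K * (Real.sqrt (μ Set.univ).toReal + 2) * B * (eLpNorm (u - v) 2 μ).toReal := by
          ring
end

section
/- Let F : (0, R) → ℝ be a nonnegative continuous function satisfying F(r) ≤ C( ∫₀^r s^{1−n} (∫₀^s F(t) t^{n−1} dt) ds + ∫₀^r s F(s) ds ) for all r ∈ (0, R), for some constant C > 0 and integer n ≥ 1. If F(r) ≤ r^k on (0, R') for some k ≥ 0 and R' ≤ R, then F(r) ≤ r^{k+1/2} on (0, R'') for some 0 < R'' ≤ R'. Consequently F ≡ 0 on a neighborhood of 0. -/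
open intervalIntegral

section helpers
open Set MeasureTheory intervalIntegral

private lemma key_int (b A a : ℝ) (hA : 0 ≤ A) (ha : 0 ≤ a)
    (g : ℝ → ℝ) (hgc : ContinuousOn g (Set.Ioo 0 b))
    (hg0 : ∀ t ∈ Set.Ioo (0:ℝ) b, 0 ≤ g t)
    (hgb : ∀ t ∈ Set.Ioo (0:ℝ) b, g t ≤ A * t ^ a) :
    ∀ s ∈ Set.Ioo (0:ℝ) b, IntervalIntegrable g MeasureTheory.volume 0 s ∧
      0 ≤ (∫ t in (0:ℝ)..s, g t) ∧ (∫ t in (0:ℝ)..s, g t) ≤ A * s ^ (a+1) / (a+1) := by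
  intro s hs
  have hsub : Set.Ioc (0:ℝ) s ⊆ Set.Ioo 0 b := fun t ht => ⟨ht.1, lt_of_le_of_lt ht.2 hs.2⟩
  have hm : AEStronglyMeasurable g (volume.restrict (Set.Ioc 0 s)) :=
    (hgc.mono hsub).aestronglyMeasurable measurableSet_Ioc
  have hInt : MeasureTheory.IntegrableOn g (Set.Ioc 0 s) := by
    refine MeasureTheory.Integrable.mono' (g := fun _ => A * s ^ a)
      (MeasureTheory.integrableOn_const measure_Ioc_lt_top.ne) hm ?_
    filter_upwards [MeasureTheory.ae_restrict_mem measurableSet_Ioc] with t ht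
    rw [Real.norm_eq_abs, abs_of_nonneg (hg0 t (hsub ht))]
    exact le_trans (hgb t (hsub ht))
      (mul_le_mul_of_nonneg_left (Real.rpow_le_rpow ht.1.le ht.2 ha) hA)
  have hII : IntervalIntegrable g MeasureTheory.volume 0 s := by
    rw [intervalIntegrable_iff_integrableOn_Ioc_of_le hs.1.le]; exact hInt
  refine ⟨hII, ?_, ?_⟩
  · rw [integral_of_le hs.1.le]
    exact MeasureTheory.setIntegral_nonneg measurableSet_Ioc (fun t ht => hg0 t (hsub ht))
  · have h1 : (∫ t in (0:ℝ)..s, g t) ≤ ∫ t in (0:ℝ)..s, A * t ^ a := by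
      rw [integral_of_le hs.1.le, integral_of_le hs.1.le]
      refine MeasureTheory.setIntegral_mono_on hInt ?_ measurableSet_Ioc
        (fun t ht => hgb t (hsub ht))
      exact ((intervalIntegrable_rpow (Or.inl ha)).const_mul A).1
    have h2 : (∫ t in (0:ℝ)..s, A * t ^ a) = A * s ^ (a+1) / (a+1) := by
      rw [intervalIntegral.integral_const_mul, integral_rpow (Or.inl (by linarith)),
        Real.zero_rpow (by linarith), sub_zero]
      ring
    linarith

private lemma prim_cont (b : ℝ) (g : ℝ → ℝ)
    (hint : ∀ s ∈ Set.Ioo (0:ℝ) b, IntervalIntegrable g MeasureTheory.volume 0 s) :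
    ContinuousOn (fun s => ∫ t in (0:ℝ)..s, g t) (Set.Ioo 0 b) := by
  intro x hx
  have hs₀ : x < (x+b)/2 ∧ (x+b)/2 < b := ⟨by linarith [hx.2], by linarith [hx.2]⟩
  have h0m : (0:ℝ) ∈ Set.uIcc 0 ((x+b)/2) := Set.left_mem_uIcc
  have h := intervalIntegral.continuousOn_primitive_interval'
    (hint ((x+b)/2) ⟨lt_trans hx.1 hs₀.1, hs₀.2⟩) h0m
  have huIcc : Set.uIcc (0:ℝ) ((x+b)/2) = Set.Icc 0 ((x+b)/2) :=
    Set.uIcc_of_le (by linarith [hx.1])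
  rw [huIcc] at h
  exact (h.continuousAt (Icc_mem_nhds hx.1 hs₀.1)).continuousWithinAt

private lemma mono_int (b : ℝ) (g : ℝ → ℝ) (hgc : ContinuousOn g (Set.Ioo 0 b))
    (hg0 : ∀ t ∈ Set.Ioo (0:ℝ) b, 0 ≤ g t)
    (hint : ∀ r ∈ Set.Ioo (0:ℝ) b, IntervalIntegrable g MeasureTheory.volume 0 r) :
    ∀ r ∈ Set.Ioo (0:ℝ) b, ∀ r' ∈ Set.Ioo (0:ℝ) b, r ≤ r' →
      (∫ t in (0:ℝ)..r, g t) ≤ ∫ t in (0:ℝ)..r', g t := by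
  intro r hr r' hr' hrr'
  have hIcc : Set.Icc r r' ⊆ Set.Ioo 0 b := fun u hu => ⟨lt_of_lt_of_le hr.1 hu.1,
    lt_of_le_of_lt hu.2 hr'.2⟩
  have h2 : IntervalIntegrable g MeasureTheory.volume r r' :=
    (hgc.mono (by rwa [Set.uIcc_of_le hrr'])).intervalIntegrable
  have hadd := intervalIntegral.integral_add_adjacent_intervals (hint r hr) h2
  have hnn : 0 ≤ ∫ t in r..r', g t :=
    intervalIntegral.integral_nonneg hrr' (fun u hu => hg0 u (hIcc hu))
  linarith

private lemma dichotomy (b : ℝ) (hb : 0 < b) (g : ℝ → ℝ)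
    (hgc : ContinuousOn g (Set.Ioo 0 b)) :
    (∀ r ∈ Set.Ioo (0:ℝ) b, ¬ IntervalIntegrable g MeasureTheory.volume 0 r) ∨
    (∀ r ∈ Set.Ioo (0:ℝ) b, IntervalIntegrable g MeasureTheory.volume 0 r) := by
  have hcpt : ∀ u v : ℝ, 0 < u → u ≤ v → v < b → IntervalIntegrable g MeasureTheory.volume u v := by
    intro u v hu huv hv
    refine (hgc.mono ?_).intervalIntegrable
    rw [Set.uIcc_of_le huv]
    exact fun w hw => ⟨lt_of_lt_of_le hu hw.1, lt_of_le_of_lt hw.2 hv⟩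
  by_cases H : IntervalIntegrable g MeasureTheory.volume 0 (b/2)
  · right
    intro r hr
    rcases le_or_gt r (b/2) with h | h
    · exact H.mono_set (Set.uIcc_subset_uIcc
        (by rw [Set.mem_uIcc]; left; exact ⟨le_rfl, by linarith⟩)
        (by rw [Set.mem_uIcc]; left; exact ⟨hr.1.le, h⟩))
    · exact H.trans (hcpt (b/2) r (by linarith) h.le hr.2)
  · left
    intro r hr hcon
    rcases le_or_gt r (b/2) with h | h
    · exact H (hcon.trans (hcpt r (b/2) hr.1 h (by linarith)))
    · exact H (hcon.mono_set (Set.uIcc_subset_uIcc (by simp) (by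
        rw [Set.mem_uIcc]; left; exact ⟨by linarith, h.le⟩)))

private lemma step (R C : ℝ) (hC : 0 < C) (n : ℕ) (hn : 1 ≤ n) (F : ℝ → ℝ)
    (hFc : ContinuousOn F (Set.Ioo 0 R))
    (hFnn : ∀ r ∈ Set.Ioo (0:ℝ) R, 0 ≤ F r)
    (hineq : ∀ r ∈ Set.Ioo (0:ℝ) R,
      F r ≤ C * ((∫ s in (0:ℝ)..r, s ^ ((1:ℝ) - n) * ∫ t in (0:ℝ)..s, F t * t ^ ((n:ℝ) - 1))
        + ∫ s in (0:ℝ)..r, s * F s))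
    (A a b : ℝ) (hb : 0 < b) (hbR : b ≤ R) (hA : 0 ≤ A) (ha : 0 ≤ a)
    (hFb : ∀ r ∈ Set.Ioo (0:ℝ) b, F r ≤ A * r ^ a) :
    ∀ r ∈ Set.Ioo (0:ℝ) b, F r ≤ 2 * C * A * r ^ (a + 2) := by
  have hsub : Set.Ioo (0:ℝ) b ⊆ Set.Ioo 0 R := Set.Ioo_subset_Ioo le_rfl hbR
  have hn1 : (1:ℝ) ≤ (n:ℝ) := by exact_mod_cast hn
  have hg1c : ContinuousOn (fun t => F t * t ^ ((n:ℝ)-1)) (Set.Ioo 0 b) :=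
    (hFc.mono hsub).mul
      (ContinuousOn.rpow_const continuousOn_id (fun t ht => Or.inl (ne_of_gt ht.1)))
  have hg1nn : ∀ t ∈ Set.Ioo (0:ℝ) b, 0 ≤ F t * t ^ ((n:ℝ)-1) := fun t ht =>
    mul_nonneg (hFnn t (hsub ht)) (Real.rpow_nonneg ht.1.le _)
  have hg1b : ∀ t ∈ Set.Ioo (0:ℝ) b, F t * t ^ ((n:ℝ)-1) ≤ A * t ^ (a + ((n:ℝ)-1)) := by
    intro t ht
    rw [Real.rpow_add ht.1]
    calc F t * t ^ ((n:ℝ)-1) ≤ (A * t ^ a) * t ^ ((n:ℝ)-1) :=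
          mul_le_mul_of_nonneg_right (hFb t ht) (Real.rpow_nonneg ht.1.le _)
      _ = A * (t ^ a * t ^ ((n:ℝ)-1)) := by ring
  have key1 := key_int b A (a + ((n:ℝ)-1)) hA (by linarith) _ hg1c hg1nn hg1b
  have hexp : a + ((n:ℝ)-1) + 1 = a + n := by ring
  have han : (1:ℝ) ≤ a + n := by linarith
  have hg2c : ContinuousOn
      (fun s => s ^ ((1:ℝ)-n) * ∫ t in (0:ℝ)..s, F t * t ^ ((n:ℝ)-1)) (Set.Ioo 0 b) :=
    (ContinuousOn.rpow_const continuousOn_id (fun s hs => Or.inl (ne_of_gt hs.1))).mul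
      (prim_cont b _ (fun s hs => (key1 s hs).1))
  have hg2nn : ∀ s ∈ Set.Ioo (0:ℝ) b,
      0 ≤ s ^ ((1:ℝ)-n) * ∫ t in (0:ℝ)..s, F t * t ^ ((n:ℝ)-1) :=
    fun s hs => mul_nonneg (Real.rpow_nonneg hs.1.le _) (key1 s hs).2.1
  have hg2b : ∀ s ∈ Set.Ioo (0:ℝ) b,
      s ^ ((1:ℝ)-n) * (∫ t in (0:ℝ)..s, F t * t ^ ((n:ℝ)-1)) ≤ A * s ^ (a+1) := by
    intro s hs
    have h1 := (key1 s hs).2.2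
    rw [hexp] at h1
    have h2 : s ^ ((1:ℝ)-n) * (∫ t in (0:ℝ)..s, F t * t ^ ((n:ℝ)-1))
        ≤ s ^ ((1:ℝ)-n) * (A * s ^ (a+n) / (a+n)) :=
      mul_le_mul_of_nonneg_left h1 (Real.rpow_nonneg hs.1.le _)
    have e : s ^ ((1:ℝ)-n) * s ^ (a+n) = s ^ (a+1) := by
      rw [← Real.rpow_add hs.1, show (1:ℝ)-n+(a+n) = a+1 by ring]
    have h3 : s ^ ((1:ℝ)-n) * (A * s ^ (a+n) / (a+n)) = (A/(a+n)) * s ^ (a+1) := by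
      rw [← e]; ring
    have h4 : (A/(a+n)) * s ^ (a+1) ≤ A * s ^ (a+1) :=
      mul_le_mul_of_nonneg_right (div_le_self hA han) (Real.rpow_nonneg hs.1.le _)
    linarith
  have key2 := key_int b A (a+1) hA (by linarith) _ hg2c hg2nn hg2b
  have hg3c : ContinuousOn (fun s => s * F s) (Set.Ioo 0 b) :=
    continuousOn_id.mul (hFc.mono hsub)
  have hg3nn : ∀ s ∈ Set.Ioo (0:ℝ) b, 0 ≤ s * F s := fun s hs =>
    mul_nonneg hs.1.le (hFnn s (hsub hs))
  have hg3b : ∀ s ∈ Set.Ioo (0:ℝ) b, s * F s ≤ A * s ^ (a+1) := by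
    intro s hs
    calc s * F s ≤ s * (A * s ^ a) := mul_le_mul_of_nonneg_left (hFb s hs) hs.1.le
      _ = A * (s ^ (1:ℝ) * s ^ a) := by rw [Real.rpow_one]; ring
      _ = A * s ^ (a+1) := by rw [show a+(1:ℝ) = 1+a by ring, Real.rpow_add hs.1]
  have key3 := key_int b A (a+1) hA (by linarith) _ hg3c hg3nn hg3b
  intro r hr
  have hI1 := (key2 r hr).2.2
  have hI2 := (key3 r hr).2.2
  have hdiv : A * r ^ (a+1+1) / (a+1+1) ≤ A * r ^ (a+2) := by
    rw [show a+1+1 = a+2 by ring]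
    exact div_le_self (mul_nonneg hA (Real.rpow_nonneg hr.1.le _)) (by linarith)
  have hI1' : (∫ s in (0:ℝ)..r, s ^ ((1:ℝ)-n) * ∫ t in (0:ℝ)..s, F t * t ^ ((n:ℝ)-1))
      ≤ A * r ^ (a+2) := le_trans hI1 hdiv
  have hI2' : (∫ s in (0:ℝ)..r, s * F s) ≤ A * r ^ (a+2) := le_trans hI2 hdiv
  have hmain : F r ≤ C * (A * r ^ (a+2) + A * r ^ (a+2)) :=
    le_trans (hineq r (hsub hr)) (mul_le_mul_of_nonneg_left (add_le_add hI1' hI2') hC.le)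
  calc F r ≤ C * (A * r ^ (a+2) + A * r ^ (a+2)) := hmain
    _ = 2 * C * A * r ^ (a+2) := by ring

end helpers

/-- Rothaus's induction-on-decay-rate machinery: if a nonnegative continuous
`F` on `(0,R)` satisfies
`F(r) ≤ C(∫₀^r s^{1−n} (∫₀^s F(t) t^{n−1} dt) ds + ∫₀^r s F(s) ds)`,
then a decay `F ≤ r^k` near `0` improves to `F ≤ r^{k+1/2}` near `0`;
consequently `F ≡ 0` on a neighborhood of `0`. -/
theorem stmt17 (R C : ℝ) (hR : 0 < R) (hC : 0 < C) (n : ℕ) (hn : 1 ≤ n)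
    (F : ℝ → ℝ) (hFc : ContinuousOn F (Set.Ioo 0 R))
    (hFnn : ∀ r ∈ Set.Ioo (0:ℝ) R, 0 ≤ F r)
    (hineq : ∀ r ∈ Set.Ioo (0:ℝ) R,
      F r ≤ C * ((∫ s in (0:ℝ)..r, s ^ ((1:ℝ) - n) * ∫ t in (0:ℝ)..s, F t * t ^ ((n:ℝ) - 1))
        + ∫ s in (0:ℝ)..r, s * F s)) :
    (∀ (k R' : ℝ), 0 ≤ k → 0 < R' → R' ≤ R →
      (∀ r ∈ Set.Ioo (0:ℝ) R', F r ≤ r ^ k) →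
      ∃ R'' : ℝ, 0 < R'' ∧ R'' ≤ R' ∧ ∀ r ∈ Set.Ioo (0:ℝ) R'', F r ≤ r ^ (k + 1 / 2)) ∧
    ∃ R₀ > (0:ℝ), ∀ r ∈ Set.Ioo (0:ℝ) (min R₀ R), F r = 0 := by
  constructor
  · -- Part 1
    intro k R' hk hR'pos hR'R hFk
    have hFb : ∀ r ∈ Set.Ioo (0:ℝ) R', F r ≤ 1 * r ^ k := by
      intro r hr; rw [one_mul]; exact hFk r hr
    have hstep := step R C hC n hn F hFc hFnn hineq 1 k R' hR'pos hR'R zero_le_one hk hFb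
    have hεpos : (0:ℝ) < (1/(2*C)) ^ ((2:ℝ)/3) := Real.rpow_pos_of_pos (by positivity) _
    refine ⟨min R' ((1/(2*C)) ^ ((2:ℝ)/3)), lt_min hR'pos hεpos, min_le_left _ _, ?_⟩
    intro r hr
    have hrR' : r ∈ Set.Ioo (0:ℝ) R' := ⟨hr.1, lt_of_lt_of_le hr.2 (min_le_left _ _)⟩
    have h1 := hstep r hrR'
    have hsplit : r ^ (k+2) = r ^ (k+1/2) * r ^ ((3:ℝ)/2) := by
      rw [← Real.rpow_add hr.1, show k+1/2+(3:ℝ)/2 = k+2 by ring]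
    have hrε : r ≤ (1/(2*C)) ^ ((2:ℝ)/3) := le_of_lt (lt_of_lt_of_le hr.2 (min_le_right _ _))
    have h2 : r ^ ((3:ℝ)/2) ≤ 1/(2*C) := by
      calc r ^ ((3:ℝ)/2) ≤ ((1/(2*C)) ^ ((2:ℝ)/3)) ^ ((3:ℝ)/2) :=
            Real.rpow_le_rpow hr.1.le hrε (by norm_num)
        _ = (1/(2*C)) ^ (((2:ℝ)/3) * ((3:ℝ)/2)) := by rw [← Real.rpow_mul (by positivity)]
        _ = 1/(2*C) := by norm_num
    have h3 : 2*C*1 * r^(k+2) ≤ r ^ (k+1/2) := by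
      rw [mul_one, hsplit]
      calc 2*C*(r^(k+1/2) * r^((3:ℝ)/2)) ≤ 2*C*(r^(k+1/2) * (1/(2*C))) := by
            exact mul_le_mul_of_nonneg_left
              (mul_le_mul_of_nonneg_left h2 (Real.rpow_nonneg hr.1.le _)) (by positivity)
        _ = r^(k+1/2) := by field_simp
    linarith
  · -- Part 2
    have hr₁ : R/2 ∈ Set.Ioo (0:ℝ) R := ⟨by linarith, by linarith⟩
    have hg1c : ContinuousOn (fun t => F t * t ^ ((n:ℝ)-1)) (Set.Ioo 0 R) :=
      hFc.mul (ContinuousOn.rpow_const continuousOn_id (fun t ht => Or.inl (ne_of_gt ht.1)))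
    have hg1nn : ∀ t ∈ Set.Ioo (0:ℝ) R, 0 ≤ F t * t ^ ((n:ℝ)-1) := fun t ht =>
      mul_nonneg (hFnn t ht) (Real.rpow_nonneg ht.1.le _)
    have hg3c : ContinuousOn (fun s => s * F s) (Set.Ioo 0 R) := continuousOn_id.mul hFc
    have hg3nn : ∀ s ∈ Set.Ioo (0:ℝ) R, 0 ≤ s * F s := fun s hs =>
      mul_nonneg hs.1.le (hFnn s hs)
    -- monotonicity (or vanishing) of I2
    have hI2mono : ∀ r ∈ Set.Ioo (0:ℝ) R, r ≤ R/2 →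
        (∫ s in (0:ℝ)..r, s * F s) ≤ ∫ s in (0:ℝ)..(R/2), s * F s := by
      rcases dichotomy R hR _ hg3c with h | h
      · intro r hr hrr₁
        rw [intervalIntegral.integral_undef (h r hr), intervalIntegral.integral_undef (h _ hr₁)]
      · intro r hr hrr₁
        exact mono_int R _ hg3c hg3nn h r hr (R/2) hr₁ hrr₁
    -- monotonicity (or vanishing) of I1
    have hI1mono : ∀ r ∈ Set.Ioo (0:ℝ) R, r ≤ R/2 →
        (∫ s in (0:ℝ)..r, s ^ ((1:ℝ)-n) * ∫ t in (0:ℝ)..s, F t * t ^ ((n:ℝ)-1))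
          ≤ ∫ s in (0:ℝ)..(R/2), s ^ ((1:ℝ)-n) * ∫ t in (0:ℝ)..s, F t * t ^ ((n:ℝ)-1) := by
      rcases dichotomy R hR _ hg1c with h | h
      · -- inner integrals are all junk zero
        have hz : ∀ r ∈ Set.Ioo (0:ℝ) R,
            (∫ s in (0:ℝ)..r, s ^ ((1:ℝ)-n) * ∫ t in (0:ℝ)..s, F t * t ^ ((n:ℝ)-1)) = 0 := by
          intro r hr
          have he : Set.EqOn (fun s => s ^ ((1:ℝ)-n) * ∫ t in (0:ℝ)..s, F t * t ^ ((n:ℝ)-1))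
              (fun _ => (0:ℝ)) (Set.uIcc 0 r) := by
            intro s hs
            rw [Set.uIcc_of_le hr.1.le] at hs
            rcases eq_or_lt_of_le hs.1 with h0 | h0
            · simp only [← h0, intervalIntegral.integral_same, mul_zero]
            · have : s ∈ Set.Ioo (0:ℝ) R := ⟨h0, lt_of_le_of_lt hs.2 hr.2⟩
              simp only [intervalIntegral.integral_undef (h s this), mul_zero]
          rw [intervalIntegral.integral_congr he, intervalIntegral.integral_zero]
        intro r hr hrr₁
        rw [hz r hr, hz _ hr₁]
      · -- inner integral is a genuine primitive
        have hinn_nn : ∀ s ∈ Set.Ioo (0:ℝ) R, 0 ≤ ∫ t in (0:ℝ)..s, F t * t ^ ((n:ℝ)-1) := by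
          intro s hs
          rw [intervalIntegral.integral_of_le hs.1.le]
          exact MeasureTheory.setIntegral_nonneg measurableSet_Ioc
            (fun t ht => hg1nn t ⟨ht.1, lt_of_le_of_lt ht.2 hs.2⟩)
        have hg2c : ContinuousOn
            (fun s => s ^ ((1:ℝ)-n) * ∫ t in (0:ℝ)..s, F t * t ^ ((n:ℝ)-1)) (Set.Ioo 0 R) :=
          (ContinuousOn.rpow_const continuousOn_id (fun s hs => Or.inl (ne_of_gt hs.1))).mul
            (prim_cont R _ h)
        have hg2nn : ∀ s ∈ Set.Ioo (0:ℝ) R,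
            0 ≤ s ^ ((1:ℝ)-n) * ∫ t in (0:ℝ)..s, F t * t ^ ((n:ℝ)-1) :=
          fun s hs => mul_nonneg (Real.rpow_nonneg hs.1.le _) (hinn_nn s hs)
        rcases dichotomy R hR _ hg2c with h2 | h2
        · intro r hr hrr₁
          rw [intervalIntegral.integral_undef (h2 r hr), intervalIntegral.integral_undef (h2 _ hr₁)]
        · intro r hr hrr₁
          exact mono_int R _ hg2c hg2nn h2 r hr (R/2) hr₁ hrr₁
    -- uniform bound near 0
    set M₀ : ℝ := C * ((∫ s in (0:ℝ)..(R/2), s ^ ((1:ℝ)-n) * ∫ t in (0:ℝ)..s, F t * t ^ ((n:ℝ)-1))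
      + ∫ s in (0:ℝ)..(R/2), s * F s) with hM₀def
    have hM : ∀ r ∈ Set.Ioo (0:ℝ) (R/2), F r ≤ M₀ := by
      intro r hr
      have hrR : r ∈ Set.Ioo (0:ℝ) R := ⟨hr.1, lt_trans hr.2 hr₁.2⟩
      exact le_trans (hineq r hrR) (mul_le_mul_of_nonneg_left
        (add_le_add (hI1mono r hrR hr.2.le) (hI2mono r hrR hr.2.le)) hC.le)
    have hq : R/4 ∈ Set.Ioo (0:ℝ) (R/2) := ⟨by linarith, by linarith⟩
    have hM₀ : 0 ≤ M₀ := le_trans (hFnn (R/4) ⟨hq.1, by linarith⟩) (hM (R/4) hq)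
    -- contraction
    set b : ℝ := min (R/2) (Real.sqrt (1/(4*C))) with hbdef
    have hbpos : 0 < b := lt_min hr₁.1 (Real.sqrt_pos.2 (by positivity))
    have hbr₁ : b ≤ R/2 := min_le_left _ _
    have hbR : b ≤ R := le_trans hbr₁ (by linarith)
    have hcontr : ∀ M : ℝ, 0 ≤ M → (∀ r ∈ Set.Ioo (0:ℝ) b, F r ≤ M) →
        ∀ r ∈ Set.Ioo (0:ℝ) b, F r ≤ M/2 := by
      intro M hM0 hFM r hr
      have hFb : ∀ r ∈ Set.Ioo (0:ℝ) b, F r ≤ M * r ^ (0:ℝ) := by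
        intro r hr; rw [Real.rpow_zero, mul_one]; exact hFM r hr
      have h := step R C hC n hn F hFc hFnn hineq M 0 b hbpos hbR hM0 le_rfl hFb r hr
      have h2 : r ^ ((0:ℝ)+2) ≤ 1/(4*C) := by
        have hrb : r ≤ Real.sqrt (1/(4*C)) := le_trans hr.2.le (min_le_right _ _)
        calc r ^ ((0:ℝ)+2) = r^(2:ℝ) := by norm_num
          _ ≤ (Real.sqrt (1/(4*C)))^(2:ℝ) := Real.rpow_le_rpow hr.1.le hrb (by norm_num)
          _ = 1/(4*C) := by
              rw [show (2:ℝ) = ((2:ℕ):ℝ) by norm_num, Real.rpow_natCast, sq,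
                Real.mul_self_sqrt (by positivity)]
      calc F r ≤ 2*C*M * r^((0:ℝ)+2) := h
        _ ≤ 2*C*M * (1/(4*C)) := mul_le_mul_of_nonneg_left h2 (by positivity)
        _ = M/2 := by field_simp; ring
    have hiter : ∀ m : ℕ, ∀ r ∈ Set.Ioo (0:ℝ) b, F r ≤ M₀ * (1/2)^m := by
      intro m
      induction m with
      | zero => intro r hr; simpa using hM r ⟨hr.1, lt_of_lt_of_le hr.2 hbr₁⟩
      | succ m ih =>
        intro r hr
        have := hcontr (M₀ * (1/2)^m) (mul_nonneg hM₀ (by positivity)) ih r hr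
        calc F r ≤ M₀*(1/2)^m / 2 := this
          _ = M₀ * (1/2)^(m+1) := by ring
    have hzero : ∀ r ∈ Set.Ioo (0:ℝ) b, F r = 0 := by
      intro r hr
      have ht : Filter.Tendsto (fun m : ℕ => M₀ * (1/2)^m) Filter.atTop (nhds 0) := by
        have := tendsto_pow_atTop_nhds_zero_of_lt_one (by norm_num : (0:ℝ) ≤ 1/2)
          (by norm_num : (1/2:ℝ) < 1)
        simpa using this.const_mul M₀
      have hle : F r ≤ 0 :=
        ge_of_tendsto ht (Filter.Eventually.of_forall (fun m => hiter m r hr))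
      exact le_antisymm hle (hFnn r ⟨hr.1, lt_of_lt_of_le hr.2 hbR⟩)
    exact ⟨b, hbpos, fun r hr => hzero r ⟨hr.1, lt_of_lt_of_le hr.2 (min_le_left _ _)⟩⟩
end
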